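/- arXiv:1312.5436 — 2 statements merged into one kernel-verified Lean document; each statement's English description precedes it below -/
import Mathlib

section
/- Let L be a finite collection of lines in R^3 and let x be a joint of multiplicity N for L such that at most 2k lines of L pass through x. Then for every plane H containing x, there exist at least N/(1000·k^2) lines of L passing through x that do not lie in H. -/
attribute [local instance] Classical.propDecidable

/-- `x` lies on the line given by the (point, direction) pair `l`. -/
def onLine (x : Fin 3 → ℝ) (l : (Fin 3 → ℝ) × (Fin 3 → ℝ)) : Prop :=
  ∃ t : ℝ, x = l.1 + t • l.2

/-- The lines of the collection `L` passing through `x`. -/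
noncomputable def linesThrough (L : Finset ((Fin 3 → ℝ) × (Fin 3 → ℝ))) (x : Fin 3 → ℝ) :
    Finset ((Fin 3 → ℝ) × (Fin 3 → ℝ)) :=
  L.filter (fun l => onLine x l)

/-- The multiplicity of `x` as a joint for `L`: the number of unordered triples of lines
of `L` through `x` whose directions span `ℝ³`. -/
noncomputable def jointMult (L : Finset ((Fin 3 → ℝ) × (Fin 3 → ℝ))) (x : Fin 3 → ℝ) : ℕ :=
  ((Finset.powersetCard 3 (linesThrough L x)).filter
    (fun T => Submodule.span ℝ ((T.image Prod.snd : Finset (Fin 3 → ℝ)) : Set (Fin 3 → ℝ)) = ⊤)).card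

/-- The plane through `x₀` with normal vector `nv`. -/
def planeThrough (x₀ nv : Fin 3 → ℝ) : Set (Fin 3 → ℝ) :=
  {y | ∑ i, nv i * (y i - x₀ i) = 0}

/-! The directions of the lines lying in `H` form a proper subspace of `ℝ³`, so every
spanning triple of lines through `x` contains a line not lying in `H`. A fixed line
through `x` lies in at most `C(2k, 2) ≤ 4k²` triples of lines through `x`, hence
`N ≤ 4k² · #{lines through x not in H}`. -/

open Finset

section Transversal

variable {α : Type*} [DecidableEq α]

theorem card_filter_mem_le_choose {S : Finset α} {P : Finset (Finset α)} {r : ℕ}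
    (hP : P ⊆ S.powersetCard (r + 1)) (b : α) :
    (P.filter (b ∈ ·)).card ≤ S.card.choose r := by
  rw [← card_powersetCard]
  refine card_le_card_of_injOn (·.erase b) (fun T hT => ?_)
    ((erase_injOn' b).mono fun T hT => (mem_filter.1 hT).2)
  obtain ⟨hTP, hbT⟩ := mem_filter.1 hT
  obtain ⟨hTS, hTcard⟩ := mem_powersetCard.1 (hP hTP)
  exact mem_powersetCard.2
    ⟨(erase_subset b T).trans hTS, by rw [card_erase_of_mem hbT, hTcard, Nat.add_sub_cancel]⟩

theorem card_le_card_mul_choose_of_forall_exists_mem {S B : Finset α} {P : Finset (Finset α)}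
    {r : ℕ} (hP : P ⊆ S.powersetCard (r + 1)) (hB : ∀ T ∈ P, ∃ b ∈ B, b ∈ T) :
    P.card ≤ B.card * S.card.choose r :=
  calc P.card ≤ (B.biUnion fun b => P.filter (b ∈ ·)).card := card_le_card fun T hT => by
          obtain ⟨b, hbB, hbT⟩ := hB T hT
          exact mem_biUnion.2 ⟨b, hbB, mem_filter.2 ⟨hT, hbT⟩⟩
    _ ≤ ∑ b ∈ B, (P.filter (b ∈ ·)).card := card_biUnion_le
    _ ≤ ∑ _b ∈ B, S.card.choose r := sum_le_sum fun b _ => card_filter_mem_le_choose hP b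
    _ = B.card * S.card.choose r := by rw [sum_const, smul_eq_mul]

end Transversal

theorem exists_dotProduct_ne_zero_of_span_eq_top {K n : Type*} [Field K] [LinearOrder K]
    [IsStrictOrderedRing K] [Fintype n] {s : Set (n → K)} (hs : Submodule.span K s = ⊤)
    {w : n → K} (hw : w ≠ 0) : ∃ v ∈ s, w ⬝ᵥ v ≠ 0 := by
  by_contra! h
  have hzero : dotProductBilin K K w = 0 := LinearMap.ext_on hs h
  exact hw (dotProduct_self_eq_zero.1 (LinearMap.congr_fun hzero w))

theorem mem_planeThrough_iff {x₀ nv y : Fin 3 → ℝ} :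
    y ∈ planeThrough x₀ nv ↔ nv ⬝ᵥ (y - x₀) = 0 :=
  Iff.rfl

theorem dotProduct_snd_eq_zero_of_subset_planeThrough {x₀ nv : Fin 3 → ℝ}
    {l : (Fin 3 → ℝ) × (Fin 3 → ℝ)} (h : {y | onLine y l} ⊆ planeThrough x₀ nv) :
    nv ⬝ᵥ l.2 = 0 := by
  have h₀ : nv ⬝ᵥ (l.1 - x₀) = 0 := mem_planeThrough_iff.1 (h ⟨0, by simp⟩)
  have h₁ : nv ⬝ᵥ (l.1 + l.2 - x₀) = 0 := mem_planeThrough_iff.1 (h ⟨1, by simp⟩)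
  rwa [add_sub_right_comm, dotProduct_add, h₀, zero_add] at h₁

theorem stmt1_general (L : Finset ((Fin 3 → ℝ) × (Fin 3 → ℝ)))
    (x : Fin 3 → ℝ) (N k : ℕ)
    (hN : jointMult L x = N)
    (hk : (linesThrough L x).card ≤ 2 * k)
    (nv : Fin 3 → ℝ) (hnv : nv ≠ 0) :
    N ≤ 1000 * k ^ 2 *
      ((linesThrough L x).filter
        (fun l => ¬ ({y | onLine y l} ⊆ planeThrough x nv))).card := by
  set S := linesThrough L x
  set B := S.filter fun l => ¬ ({y | onLine y l} ⊆ planeThrough x nv)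
  have hB : ∀ T ∈ (powersetCard 3 S).filter (fun T : Finset _ =>
      Submodule.span ℝ ((T.image Prod.snd : Finset (Fin 3 → ℝ)) : Set (Fin 3 → ℝ)) = ⊤),
      ∃ l ∈ B, l ∈ T := by
    intro T hT
    obtain ⟨hTS, hspan⟩ := mem_filter.1 hT
    obtain ⟨v, hv, hv_ne⟩ := exists_dotProduct_ne_zero_of_span_eq_top hspan hnv
    obtain ⟨l, hlT, rfl⟩ := mem_image.1 hv
    exact ⟨l, mem_filter.2 ⟨(mem_powersetCard.1 hTS).1 hlT,
      fun hl => hv_ne (dotProduct_snd_eq_zero_of_subset_planeThrough hl)⟩, hlT⟩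
  have hchoose : S.card.choose 2 ≤ 1000 * k ^ 2 :=
    calc S.card.choose 2 ≤ S.card ^ 2 := Nat.choose_le_pow _ _
      _ ≤ (2 * k) ^ 2 := Nat.pow_le_pow_left hk 2
      _ ≤ 1000 * k ^ 2 := by nlinarith
  calc N = _ := hN.symm
    _ ≤ B.card * S.card.choose 2 :=
      card_le_card_mul_choose_of_forall_exists_mem (filter_subset _ _) hB
    _ ≤ B.card * (1000 * k ^ 2) := Nat.mul_le_mul_left _ hchoose
    _ = 1000 * k ^ 2 * B.card := Nat.mul_comm _ _

theorem stmt1 (L : Finset ((Fin 3 → ℝ) × (Fin 3 → ℝ)))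
    (hL : ∀ l ∈ L, l.2 ≠ 0)
    (x : Fin 3 → ℝ) (N k : ℕ)
    (hN : jointMult L x = N) (hjoint : 1 ≤ N)
    (hk : (linesThrough L x).card ≤ 2 * k)
    (nv : Fin 3 → ℝ) (hnv : nv ≠ 0) :
    N ≤ 1000 * k ^ 2 *
      ((linesThrough L x).filter
        (fun l => ¬ ({y | onLine y l} ⊆ planeThrough x nv))).card :=
  stmt1_general L x N k hN hk nv hnv
end

section
/- Let L be a finite collection of L lines in R^n (n ≥ 2) and J the set of joints formed by L. Then |J| ≤ c_n·L^{n/(n-1)}, where c_n depends only on n. -/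
/-- A subset of `ℝⁿ` which is an (affine) line. -/
def IsLine {n : ℕ} (l : Set (Fin n → ℝ)) : Prop :=
  ∃ v b : Fin n → ℝ, b ≠ 0 ∧ l = {x | ∃ t : ℝ, x = v + t • b}

/-- The set of joints of a collection of lines: points such that the directions of the
lines of the collection through the point span `ℝⁿ`. -/
def jointSet {n : ℕ} (L : Finset (Set (Fin n → ℝ))) : Set (Fin n → ℝ) :=
  {x | Submodule.span ℝ
    {b : Fin n → ℝ | b ≠ 0 ∧ ∃ l ∈ L, x ∈ l ∧ ∃ v, l = {y | ∃ t : ℝ, y = v + t • b}} = ⊤}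

/-!
The polynomial method. If a nonzero polynomial `f` of degree at most `d` vanishes on the joints,
some line carries at most `d` joints: otherwise `f` vanishes on every line, so at each joint the
gradient of `f` is orthogonal to a spanning set of directions and vanishes; a nonzero partial
derivative of `f` is then a polynomial of smaller degree vanishing on the joints, and we descend
on `d`. Deleting that line and iterating gives `|J| ≤ d |L|`. Counting monomials produces such an
`f` with `d ≤ n |J|^(1/n)`, hence `|J|^((n-1)/n) ≤ n |L|`.
-/

open MvPolynomial

namespace MvPolynomial

variable {σ : Type*}

section pderiv

variable {R : Type*} [CommRing R] {f : MvPolynomial σ R} {i : σ}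

theorem totalDegree_pderiv_add_one_le (hf : pderiv i f ≠ 0) :
    (pderiv i f).totalDegree + 1 ≤ f.totalDegree := by
  obtain ⟨m, hm, hdeg⟩ := Finset.exists_mem_eq_sup _ (support_nonempty.2 hf)
    fun s : σ →₀ ℕ => s.sum fun _ e => e
  have hcoeff : coeff (m + Finsupp.single i 1) f ≠ 0 := by
    intro h
    rw [mem_support_iff, coeff_pderiv, h, zero_mul] at hm
    exact hm rfl
  calc (pderiv i f).totalDegree + 1 = (m + Finsupp.single i 1).sum fun _ e => e := by
        rw [totalDegree, hdeg, Finsupp.sum_add_index' (fun _ => rfl) (fun _ _ _ => rfl),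
          Finsupp.sum_single_index rfl]
    _ ≤ f.totalDegree := le_totalDegree (mem_support_iff.2 hcoeff)

theorem eq_C_of_forall_pderiv_eq_zero [IsDomain R] [CharZero R] (h : ∀ i, pderiv i f = 0) :
    f = C (coeff 0 f) := by
  classical
  ext m
  rw [coeff_C]
  split_ifs with hm
  · rw [hm]
  obtain ⟨i, hi⟩ : ∃ i, m i ≠ 0 := by
    by_contra! h0
    exact hm (Finsupp.ext h0).symm
  obtain ⟨m', rfl⟩ : ∃ m', m = m' + Finsupp.single i 1 :=
    ⟨m - Finsupp.single i 1, (tsub_add_cancel_of_le (Finsupp.single_le_iff.2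
      (Nat.one_le_iff_ne_zero.2 hi))).symm⟩
  have := coeff_pderiv (i := i) f m'
  rw [h i, coeff_zero, eq_comm, mul_eq_zero] at this
  exact this.resolve_right (Nat.cast_add_one_ne_zero _)

end pderiv

section restrictLine

variable {R : Type*} [CommRing R]

noncomputable def restrictLine (v b : σ → R) : MvPolynomial σ R →ₐ[R] Polynomial R :=
  aeval fun i => Polynomial.C (b i) * Polynomial.X + Polynomial.C (v i)

@[simp]
theorem restrictLine_X (v b : σ → R) (i : σ) :
    restrictLine v b (X i) = Polynomial.C (b i) * Polynomial.X + Polynomial.C (v i) :=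
  aeval_X _ i

theorem eval_restrictLine (v b : σ → R) (f : MvPolynomial σ R) (t : R) :
    (restrictLine v b f).eval t = eval (v + t • b) f := by
  induction f using MvPolynomial.induction_on with
  | C a => simp [restrictLine]
  | add p q hp hq => simp [hp, hq]
  | mul_X p i hp => simp [hp]; ring

theorem natDegree_restrictLine_le (v b : σ → R) (f : MvPolynomial σ R) :
    (restrictLine v b f).natDegree ≤ f.totalDegree := by
  conv_lhs => rw [f.as_sum, map_sum]
  refine Polynomial.natDegree_sum_le_of_forall_le _ _ fun m hm => ?_
  rw [restrictLine, aeval_monomial, ← Polynomial.C_eq_algebraMap]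
  refine (Polynomial.natDegree_C_mul_le _ _).trans ?_
  refine (Polynomial.natDegree_prod_le _ _).trans ((Finset.sum_le_sum fun i _ => ?_).trans
    (le_totalDegree hm))
  exact Polynomial.natDegree_pow_le_of_le _ Polynomial.natDegree_linear_le |>.trans (mul_one _).le

theorem derivative_restrictLine [Fintype σ] (v b : σ → R) (f : MvPolynomial σ R) :
    Polynomial.derivative (restrictLine v b f) = restrictLine v b (∑ i, b i • pderiv i f) := by
  induction f using MvPolynomial.induction_on with
  | C a => simp [restrictLine]
  | add p q hp hq => simp [hp, hq, Finset.sum_add_distrib]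
  | mul_X p i hp =>
    classical
    simp only [map_mul, Polynomial.derivative_mul, hp, pderiv_mul, smul_add, Finset.sum_add_distrib,
      pderiv_X, Pi.single_apply, mul_ite, mul_one, mul_zero, smul_ite, smul_zero,
      Finset.sum_ite_eq, Finset.mem_univ, if_true, ← smul_mul_assoc, ← Finset.sum_mul, map_add,
      restrictLine_X, map_smul, Polynomial.derivative_C, Polynomial.derivative_X, add_zero,
      Polynomial.smul_eq_C_mul]
    ring

variable [IsDomain R]

theorem restrictLine_eq_zero_of_totalDegree_lt_ncard {v b : σ → R} (hb : b ≠ 0)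
    {f : MvPolynomial σ R} {s : Set (σ → R)} (hsl : s ⊆ {x | ∃ t : R, x = v + t • b})
    (hfs : ∀ x ∈ s, eval x f = 0) (hdeg : f.totalDegree < s.ncard) : restrictLine v b f = 0 := by
  set T := (fun t : R => v + t • b) ⁻¹' s
  have hTs : T.ncard = s.ncard :=
    Set.ncard_preimage_of_injective_subset_range
      ((add_right_injective v).comp (smul_left_injective R hb))
      fun x hx => (hsl hx).imp fun _ ht => ht.symm
  have hT : T.Finite := Set.finite_of_ncard_pos (hTs ▸ (Nat.zero_le _).trans_lt hdeg)
  refine Polynomial.eq_zero_of_natDegree_lt_card_of_eval_eq_zero' _ hT.toFinset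
    (fun t ht => ?_) ?_
  · rw [eval_restrictLine]
    exact hfs _ (hT.mem_toFinset.1 ht)
  · rw [← Set.ncard_eq_toFinset_card _ hT, hTs]
    exact (natDegree_restrictLine_le v b f).trans_lt hdeg

theorem dotProduct_eval_pderiv_eq_zero [Fintype σ] [Infinite R] {f : MvPolynomial σ R}
    {v b : σ → R} (hf : ∀ t : R, eval (v + t • b) f = 0) (t : R) :
    b ⬝ᵥ (fun i => eval (v + t • b) (pderiv i f)) = 0 := by
  have h0 : restrictLine v b f = 0 := Polynomial.funext fun t => by simp [eval_restrictLine, hf]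
  have := congrArg (Polynomial.eval t) (derivative_restrictLine v b f)
  rw [h0, Polynomial.derivative_zero, Polynomial.eval_zero, eval_restrictLine] at this
  simpa [dotProduct] using this.symm

end restrictLine

section vanishing

variable {K : Type*} [Field K]

theorem exists_mem_ne_zero_forall_eval_eq_zero (V : Submodule K (MvPolynomial σ K))
    [FiniteDimensional K V] (S : Finset (σ → K)) (hS : S.card < Module.finrank K V) :
    ∃ f ∈ V, f ≠ 0 ∧ ∀ x ∈ S, eval x f = 0 := by
  let evalOn : V →ₗ[K] S → K := LinearMap.pi fun x => (aeval x.1).toLinearMap ∘ₗ V.subtype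
  have hdim : Module.finrank K (S → K) < Module.finrank K V := by simpa using hS
  obtain ⟨⟨f, hfV⟩, hker, hf0⟩ :=
    Submodule.exists_mem_ne_zero_of_ne_bot (LinearMap.ker_ne_bot_of_finrank_lt (f := evalOn) hdim)
  refine ⟨f, hfV, by simpa using hf0, fun x hx => ?_⟩
  have := congrFun (LinearMap.mem_ker.1 hker) ⟨x, hx⟩
  simpa [evalOn] using this

theorem pow_card_le_finrank_restrictTotalDegree [Fintype σ] (k : ℕ) :
    (k + 1) ^ Fintype.card σ ≤ Module.finrank K (restrictTotalDegree σ K (Fintype.card σ * k)) := by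
  classical
  let e : (σ → Fin (k + 1)) → σ →₀ ℕ := fun a => Finsupp.equivFunOnFinite.symm fun i => a i
  have he : Function.Injective e := fun a a' h =>
    _root_.funext fun i => Fin.ext (congrFun (Finsupp.equivFunOnFinite.symm.injective h) i)
  have hmem : ∀ a, monomial (e a) (1 : K) ∈ restrictTotalDegree σ K (Fintype.card σ * k) := by
    intro a
    rw [mem_restrictTotalDegree, totalDegree_monomial _ one_ne_zero,
      Finsupp.sum_fintype _ _ fun _ => rfl]
    calc ∑ i, e a i ≤ ∑ _i : σ, k := Finset.sum_le_sum fun i _ => Nat.lt_succ_iff.1 (a i).isLt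
      _ = Fintype.card σ * k := by simp
  have hli : LinearIndependent K fun a => (⟨monomial (e a) 1, hmem a⟩ :
      restrictTotalDegree σ K (Fintype.card σ * k)) :=
    LinearIndependent.of_comp (Submodule.subtype _)
      ((basisMonomials σ K).linearIndependent.comp e he)
  simpa using hli.fintype_card_le_finrank

theorem exists_ne_zero_totalDegree_le_forall_eval_eq_zero [Fintype σ] (S : Finset (σ → K))
    {k : ℕ} (hS : S.card < (k + 1) ^ Fintype.card σ) :
    ∃ f : MvPolynomial σ K, f ≠ 0 ∧ f.totalDegree ≤ Fintype.card σ * k ∧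
      ∀ x ∈ S, eval x f = 0 := by
  obtain ⟨f, hfV, hf0, hfS⟩ := exists_mem_ne_zero_forall_eval_eq_zero _ S
    (hS.trans_le (pow_card_le_finrank_restrictTotalDegree k))
  exact ⟨f, hf0, (mem_restrictTotalDegree _ _ _).1 hfV, hfS⟩

end vanishing

end MvPolynomial

section line

variable {E : Type*} [AddCommGroup E] [Module ℝ E]

theorem line_eq_of_mem_of_mem {v b x y : E} (hx : x ∈ {z | ∃ t : ℝ, z = v + t • b})
    (hy : y ∈ {z | ∃ t : ℝ, z = v + t • b}) (hxy : x ≠ y) :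
    {z | ∃ t : ℝ, z = v + t • b} = {z | ∃ t : ℝ, z = x + t • (y - x)} := by
  obtain ⟨s, rfl⟩ := hx
  obtain ⟨u, rfl⟩ := hy
  have hsu : u - s ≠ 0 := sub_ne_zero.2 fun h => hxy (by rw [h])
  ext z
  constructor
  · rintro ⟨t, rfl⟩
    refine ⟨(t - s) / (u - s), ?_⟩
    rw [show v + u • b - (v + s • b) = (u - s) • b by module, smul_smul, div_mul_cancel₀ _ hsu]
    module
  · rintro ⟨r, rfl⟩
    exact ⟨s + r * (u - s), by module⟩

theorem mem_span_singleton_of_line_eq {v b v' b' : E}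
    (h : {z | ∃ t : ℝ, z = v + t • b} = {z | ∃ t : ℝ, z = v' + t • b'}) : b' ∈ ℝ ∙ b := by
  have hv' : v' ∈ {z | ∃ t : ℝ, z = v + t • b} := h ▸ ⟨0, by simp⟩
  have hvb' : v' + b' ∈ {z | ∃ t : ℝ, z = v + t • b} := h ▸ ⟨1, by simp⟩
  obtain ⟨s, hs⟩ := hv'
  obtain ⟨u, hu⟩ := hvb'
  refine Submodule.mem_span_singleton.2 ⟨u - s, ?_⟩
  rw [sub_smul, ← add_sub_cancel_left v' b', hu, hs]
  abel

end line

section joints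

variable {n : ℕ}

def lineDirections (L : Finset (Set (Fin n → ℝ))) (x : Fin n → ℝ) : Set (Fin n → ℝ) :=
  {b | b ≠ 0 ∧ ∃ l ∈ L, x ∈ l ∧ ∃ v, l = {y | ∃ t : ℝ, y = v + t • b}}

theorem mem_jointSet_iff {L : Finset (Set (Fin n → ℝ))} {x : Fin n → ℝ} :
    x ∈ jointSet L ↔ Submodule.span ℝ (lineDirections L x) = ⊤ :=
  Iff.rfl

theorem IsLine.subsingleton_inter {l₁ l₂ : Set (Fin n → ℝ)} (h₁ : IsLine l₁) (h₂ : IsLine l₂)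
    (hne : l₁ ≠ l₂) : (l₁ ∩ l₂).Subsingleton := by
  obtain ⟨v₁, b₁, -, rfl⟩ := h₁
  obtain ⟨v₂, b₂, -, rfl⟩ := h₂
  intro x hx y hy
  by_contra hxy
  exact hne ((line_eq_of_mem_of_mem hx.1 hy.1 hxy).trans
    (line_eq_of_mem_of_mem hx.2 hy.2 hxy).symm)

theorem mem_jointSet_of_forall_mem {L L' : Finset (Set (Fin n → ℝ))} {x : Fin n → ℝ}
    (hx : x ∈ jointSet L) (h : ∀ l ∈ L, x ∈ l → l ∈ L') : x ∈ jointSet L' :=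
  top_le_iff.1 (hx.symm.trans_le (Submodule.span_mono
    fun _ ⟨hb, l, hl, hxl, hv⟩ => ⟨hb, l, h l hl hxl, hxl, hv⟩))

theorem jointSet_mono {L L' : Finset (Set (Fin n → ℝ))} (h : L ⊆ L') : jointSet L ⊆ jointSet L' :=
  fun _ hx => mem_jointSet_of_forall_mem hx fun _ hl _ => h hl

theorem jointSet_diff_subset_erase [DecidableEq (Set (Fin n → ℝ))] (L : Finset (Set (Fin n → ℝ)))
    (l : Set (Fin n → ℝ)) :
    jointSet L \ l ⊆ jointSet (L.erase l) :=
  fun _ ⟨hx, hxl⟩ => mem_jointSet_of_forall_mem hx fun _ hl' hxl' =>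
    Finset.mem_erase.2 ⟨fun h => hxl (h ▸ hxl'), hl'⟩

theorem exists_mem_offDiag_of_mem_jointSet (hn : 2 ≤ n) {L : Finset (Set (Fin n → ℝ))}
    {x : Fin n → ℝ} (hx : x ∈ jointSet L) : ∃ p ∈ L.offDiag, x ∈ p.1 ∩ p.2 := by
  have : Nonempty (Fin n) := ⟨⟨0, by omega⟩⟩
  rw [mem_jointSet_iff] at hx
  obtain ⟨b₀, hb₀, l₀, hl₀, hxl₀, v₀, rfl⟩ : (lineDirections L x).Nonempty :=
    Set.nonempty_iff_ne_empty.2 fun hD => by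
      rw [hD, Submodule.span_empty] at hx
      exact bot_ne_top hx
  by_contra! hone
  have hle : (⊤ : Submodule ℝ (Fin n → ℝ)) ≤ ℝ ∙ b₀ := by
    rw [← hx]
    refine Submodule.span_le.2 fun b ⟨_, l, hl, hxl, v, hlv⟩ => ?_
    subst hlv
    by_cases hll₀ : {y | ∃ t : ℝ, y = v + t • b} = {y | ∃ t : ℝ, y = v₀ + t • b₀}
    · exact mem_span_singleton_of_line_eq hll₀.symm
    · exact absurd ⟨hxl, hxl₀⟩ (hone (_, _) (Finset.mem_offDiag.2 ⟨hl, hl₀, hll₀⟩))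
  have := (Submodule.finrank_mono hle).trans_eq (finrank_span_singleton hb₀)
  rw [finrank_top, Module.finrank_fin_fun] at this
  omega

theorem jointSet_finite (hn : 2 ≤ n) {L : Finset (Set (Fin n → ℝ))} (hL : ∀ l ∈ L, IsLine l) :
    (jointSet L).Finite := by
  refine (L.offDiag.finite_toSet.biUnion (t := fun p => p.1 ∩ p.2) fun p hp => ?_).subset
    fun x hx =>
      let ⟨_, hp, hxp⟩ := exists_mem_offDiag_of_mem_jointSet hn hx
      Set.mem_biUnion hp hxp
  obtain ⟨h₁, h₂, hne⟩ := Finset.mem_offDiag.1 hp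
  exact ((hL _ h₁).subsingleton_inter (hL _ h₂) hne).finite

theorem eval_pderiv_eq_zero_of_mem_jointSet {L : Finset (Set (Fin n → ℝ))}
    {f : MvPolynomial (Fin n) ℝ} (hf : ∀ l ∈ L, ∀ y ∈ l, eval y f = 0) {x : Fin n → ℝ}
    (hx : x ∈ jointSet L) (i : Fin n) : eval x (pderiv i f) = 0 := by
  suffices h : (fun j => eval x (pderiv j f)) = 0 from congrFun h i
  refine dotProduct_eq_zero _ fun w => ?_
  rw [dotProduct_comm]
  have hw : w ∈ Submodule.span ℝ (lineDirections L x) := mem_jointSet_iff.1 hx ▸ Submodule.mem_top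
  induction hw using Submodule.span_induction with
  | mem b hb =>
    obtain ⟨-, l, hl, hxl, v, rfl⟩ := hb
    obtain ⟨t, rfl⟩ := hxl
    exact dotProduct_eval_pderiv_eq_zero (fun s => hf _ hl _ ⟨s, rfl⟩) t
  | zero => simp
  | add => simp [add_dotProduct, *]
  | smul => simp [smul_dotProduct, *]

theorem exists_mem_ncard_jointSet_inter_le {L : Finset (Set (Fin n → ℝ))}
    (hL : ∀ l ∈ L, IsLine l) (hJ : (jointSet L).Nonempty) {d : ℕ} {f : MvPolynomial (Fin n) ℝ}
    (hf0 : f ≠ 0) (hfd : f.totalDegree ≤ d) (hfJ : ∀ x ∈ jointSet L, eval x f = 0) :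
    ∃ l ∈ L, (jointSet L ∩ l).ncard ≤ d := by
  induction d using Nat.strong_induction_on generalizing f with
  | _ d ih =>
  by_contra! hmany
  have hfL : ∀ l ∈ L, ∀ y ∈ l, eval y f = 0 := by
    intro l hl
    obtain ⟨v, b, hb, rfl⟩ := hL l hl
    rintro _ ⟨t, rfl⟩
    rw [← eval_restrictLine, restrictLine_eq_zero_of_totalDegree_lt_ncard hb
      Set.inter_subset_right (fun x hx => hfJ x hx.1) (hfd.trans_lt (hmany _ hl)),
      Polynomial.eval_zero]
  obtain ⟨i, hi⟩ : ∃ i, pderiv i f ≠ 0 := by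
    by_contra! h
    obtain ⟨x, hx⟩ := hJ
    have hC := eq_C_of_forall_pderiv_eq_zero h
    have hc := hfJ x hx
    rw [hC, eval_C] at hc
    exact hf0 (by rw [hC, hc, C_0])
  have hdeg := totalDegree_pderiv_add_one_le hi
  obtain ⟨l, hl, hle⟩ := ih (d - 1) (by omega) hi (by omega)
    fun x hx => eval_pderiv_eq_zero_of_mem_jointSet hfL hx i
  exact (hmany l hl).not_ge (hle.trans (Nat.sub_le d 1))

theorem ncard_jointSet_le_mul (hn : 2 ≤ n) {d : ℕ} {f : MvPolynomial (Fin n) ℝ} (hf0 : f ≠ 0)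
    (hfd : f.totalDegree ≤ d) (L : Finset (Set (Fin n → ℝ))) (hL : ∀ l ∈ L, IsLine l)
    (hfJ : ∀ x ∈ jointSet L, eval x f = 0) : (jointSet L).ncard ≤ d * L.card := by
  classical
  induction L using Finset.strongInduction with
  | H L ih =>
  rcases (jointSet L).eq_empty_or_nonempty with hJ | hJ
  · simp [hJ]
  obtain ⟨l, hl, hle⟩ := exists_mem_ncard_jointSet_inter_le hL hJ hf0 hfd hfJ
  have hL' : ∀ l' ∈ L.erase l, IsLine l' := fun l' hl' => hL l' (Finset.mem_of_mem_erase hl')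
  calc (jointSet L).ncard = (jointSet L ∩ l).ncard + (jointSet L \ l).ncard :=
        (Set.ncard_inter_add_ncard_sdiff_eq_ncard _ _ (jointSet_finite hn hL)).symm
    _ ≤ d + d * (L.erase l).card := add_le_add hle <|
        (Set.ncard_le_ncard (jointSet_diff_subset_erase L l) (jointSet_finite hn hL')).trans <|
        ih _ (Finset.erase_ssubset hl) hL' fun x hx => hfJ x (jointSet_mono (L.erase_subset l) hx)
    _ = d * L.card := by rw [← Finset.card_erase_add_one hl]; ring

end joints

theorem lt_floor_rpow_inv_add_one_pow (m : ℕ) {n : ℕ} (hn : n ≠ 0) :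
    m < (⌊(m : ℝ) ^ (n : ℝ)⁻¹⌋₊ + 1) ^ n := by
  have h := pow_lt_pow_left₀ (Nat.lt_floor_add_one ((m : ℝ) ^ (n : ℝ)⁻¹)) (by positivity) hn
  rw [Real.rpow_inv_natCast_pow (Nat.cast_nonneg m) hn] at h
  exact_mod_cast h

theorem Real.le_rpow_div_sub_one_of_le_mul_rpow_inv {a m p : ℝ} (ha : 0 ≤ a) (hm : 0 ≤ m)
    (hp : 1 < p) (h : m ≤ a * m ^ p⁻¹) : m ≤ a ^ (p / (p - 1)) := by
  rcases hm.eq_or_lt with rfl | hm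
  · exact Real.rpow_nonneg ha _
  have hsplit : m ^ (1 - p⁻¹) * m ^ p⁻¹ = m := by
    rw [← Real.rpow_add hm, sub_add_cancel, Real.rpow_one]
  have hle : m ^ (1 - p⁻¹) ≤ a :=
    le_of_mul_le_mul_right (hsplit.trans_le h) (Real.rpow_pos_of_pos hm _)
  have hp0 : p ≠ 0 := by linarith
  have hp1 : p - 1 ≠ 0 := by linarith
  calc m = (m ^ (1 - p⁻¹)) ^ (p / (p - 1)) := by
        rw [← Real.rpow_mul hm.le, show (1 - p⁻¹) * (p / (p - 1)) = 1 by field_simp,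
          Real.rpow_one]
    _ ≤ a ^ (p / (p - 1)) :=
        Real.rpow_le_rpow (by positivity) hle (div_nonneg (by linarith) (by linarith))

theorem stmt10 (n : ℕ) (hn : 2 ≤ n) :
    ∃ c : ℝ, ∀ L : Finset (Set (Fin n → ℝ)), (∀ l ∈ L, IsLine l) →
      (jointSet L).Finite ∧
      (Nat.card (jointSet L) : ℝ) ≤ c * (L.card : ℝ) ^ ((n : ℝ) / ((n : ℝ) - 1)) := by
  refine ⟨(n : ℝ) ^ ((n : ℝ) / ((n : ℝ) - 1)), fun L hL => ⟨jointSet_finite hn hL, ?_⟩⟩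
  have hJ := jointSet_finite hn hL
  rw [Nat.card_coe_set_eq]
  set m := (jointSet L).ncard
  set k := ⌊(m : ℝ) ^ (n : ℝ)⁻¹⌋₊
  obtain ⟨f, hf0, hfd, hfJ⟩ := exists_ne_zero_totalDegree_le_forall_eval_eq_zero hJ.toFinset
    (k := k) (by
      rw [← Set.ncard_eq_toFinset_card _ hJ, Fintype.card_fin]
      exact lt_floor_rpow_inv_add_one_pow m (by omega))
  rw [Fintype.card_fin] at hfd
  have hcount : (m : ℝ) ≤ n * L.card * (m : ℝ) ^ (n : ℝ)⁻¹ := calc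
    (m : ℝ) ≤ (n * k * L.card : ℕ) := by
      exact_mod_cast ncard_jointSet_le_mul hn hf0 hfd L hL fun x hx => hfJ x (hJ.mem_toFinset.2 hx)
    _ ≤ n * L.card * (m : ℝ) ^ (n : ℝ)⁻¹ := by
      push_cast
      rw [mul_right_comm]
      gcongr
      exact Nat.floor_le (by positivity)
  calc (m : ℝ) ≤ (n * L.card) ^ ((n : ℝ) / ((n : ℝ) - 1)) :=
        Real.le_rpow_div_sub_one_of_le_mul_rpow_inv (by positivity) (by positivity)
          (Nat.one_lt_cast.2 hn) hcount
    _ = _ := Real.mul_rpow (by positivity) (by positivity)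
end
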